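/- arXiv:1109.1334 — 2 statements merged into one kernel-verified Lean document; each statement's English description precedes it below -/
import Mathlib

section
/- Let X be a finite nonempty set, Y a finite set, and for each index t in a finite index set T₂ let y_{t(1)}, y_{t(2)} ∈ Y be two distinct points, with the pairs {y_{t(1)}, y_{t(2)}} pairwise disjoint as t ranges over T₂. For t, t' ∈ T₂ define G_{t,t'} = (1/(2|X|)) J_X ⊗ (J_{{y_{t(1)}},{y_{t'(1)}}} + J_{{y_{t(2)}},{y_{t'(2)}}} − J_{{y_{t(1)}},{y_{t'(2)}}} − J_{{y_{t(2)}},{y_{t'(1)}}}). Then G_{t,t'} · G_{t''',t''} = δ_{t',t'''} G_{t,t''} for all t, t', t'', t''' ∈ T₂; that is, the matrices G_{t,t'} multiply like matrix units. -/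
/-!
With `d t = e_{y1 t} - e_{y2 t}`, the second Kronecker factor of `G t t'` is the rank-one matrix
`d t (d t')ᵀ`. The vectors `d t` are pairwise orthogonal (their supports are disjoint) with
`d t ⬝ d t = 2`, so the matrices `½ d t (d t')ᵀ` multiply like matrix units. Since `J / |X|` is
idempotent, `G t t' = (J / |X|) ⊗ (½ d t (d t')ᵀ)` inherits the same multiplication rule.
-/

open Matrix Kronecker

section

variable {R : Type*} [CommRing R] {n : Type*} [DecidableEq n]

theorem single_add_single_sub_single_sub_single {m : Type*} [DecidableEq m] (a b : m) (c d : n) :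
    single a c (1 : R) + single b d 1 - single a d 1 - single b c 1 =
      vecMulVec (Pi.single a 1 - Pi.single b 1) (Pi.single c 1 - Pi.single d 1) := by
  simp only [single_eq_single_vecMulVec_single, sub_vecMulVec, vecMulVec_sub]
  abel

variable [Fintype n]

theorem dotProduct_single_sub_single_self {a b : n} (hab : a ≠ b) :
    (Pi.single a 1 - Pi.single b 1 : n → R) ⬝ᵥ (Pi.single a 1 - Pi.single b 1) = 2 := by
  simp only [dotProduct_sub, dotProduct_single, Pi.sub_apply, Pi.single_eq_same,
    Pi.single_eq_of_ne hab, Pi.single_eq_of_ne hab.symm, sub_zero, zero_sub, mul_one]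
  ring

theorem dotProduct_single_sub_single_of_disjoint {a b c d : n}
    (h : Disjoint ({a, b} : Set n) {c, d}) :
    (Pi.single a 1 - Pi.single b 1 : n → R) ⬝ᵥ (Pi.single c 1 - Pi.single d 1) = 0 := by
  simp only [Set.disjoint_insert_left, Set.disjoint_insert_right, Set.disjoint_singleton,
    Set.mem_insert_iff, Set.mem_singleton_iff, not_or] at h
  simp [dotProduct_sub, h]

end

theorem IsIdempotentElem.kronecker_mul_kronecker {R : Type*} [CommRing R] {l m n : Type*}
    [Fintype l] [Fintype m] {P : Matrix l l R} (hP : IsIdempotentElem P)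
    (A : Matrix m m R) (B : Matrix m n R) :
    P ⊗ₖ A * P ⊗ₖ B = P ⊗ₖ (A * B) := by
  rw [← mul_kronecker_mul, hP.eq]

section

variable {K : Type*} [Field K]

theorem isIdempotentElem_inv_card_smul_allOnes [CharZero K] (X : Type*) [Fintype X]
    [Nonempty X] : IsIdempotentElem ((Fintype.card X : K)⁻¹ • of fun _ _ : X => (1 : K)) := by
  have hX : (Fintype.card X : K) ≠ 0 := Nat.cast_ne_zero.mpr Fintype.card_ne_zero
  ext i j
  simp [mul_apply, hX]

theorem smul_vecMulVec_mul_smul_vecMulVec_of_orthogonal {n T : Type*} [Fintype n]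
    [DecidableEq T] (d : T → n → K) {r : K} (hr : r ≠ 0)
    (hd : ∀ t t', d t ⬝ᵥ d t' = if t = t' then r else 0) (t t' t'' t''' : T) :
    r⁻¹ • vecMulVec (d t) (d t') * r⁻¹ • vecMulVec (d t''') (d t'') =
      if t' = t''' then r⁻¹ • vecMulVec (d t) (d t'') else 0 := by
  rw [smul_mul_smul_comm, vecMulVec_mul_vecMulVec, hd]
  split_ifs
  · rw [vecMulVec_smul, smul_smul, mul_assoc, inv_mul_cancel₀ hr, mul_one]
  · simp

end

theorem stmt_2_general (X Y T₂ : Type*) [Fintype X] [Nonempty X] [Fintype Y] [DecidableEq Y]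
    [DecidableEq T₂]
    (y1 y2 : T₂ → Y) (hne : ∀ t, y1 t ≠ y2 t)
    (hdisj : ∀ t t', t ≠ t' → ({y1 t, y2 t} : Set Y) ∩ {y1 t', y2 t'} = ∅) :
    let J : Matrix X X ℂ := Matrix.of fun _ _ => 1
    let G : T₂ → T₂ → Matrix (X × Y) (X × Y) ℂ := fun t t' =>
      (1 / (2 * (Fintype.card X : ℂ))) •
        (J ⊗ₖ (Matrix.single (y1 t) (y1 t') 1 + Matrix.single (y2 t) (y2 t') 1
          - Matrix.single (y1 t) (y2 t') 1 - Matrix.single (y2 t) (y1 t') 1))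
    ∀ t t' t'' t''' : T₂,
      G t t' * G t''' t'' = if t' = t''' then G t t'' else 0 := by
  intro J G t t' t'' t'''
  let d (s : T₂) : Y → ℂ := Pi.single (y1 s) 1 - Pi.single (y2 s) 1
  have hG (a b : T₂) :
      G a b = ((Fintype.card X : ℂ)⁻¹ • J) ⊗ₖ ((2 : ℂ)⁻¹ • vecMulVec (d a) (d b)) := by
    simp only [G, d, smul_kronecker, kronecker_smul, smul_smul,
      single_add_single_sub_single_sub_single]
    congr 1
    ring
  have hd (a b : T₂) : d a ⬝ᵥ d b = if a = b then 2 else 0 := by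
    split_ifs with hab
    · exact hab ▸ dotProduct_single_sub_single_self (hne a)
    · exact dotProduct_single_sub_single_of_disjoint
        (Set.disjoint_iff_inter_eq_empty.mpr (hdisj a b hab))
  rw [hG, hG, (isIdempotentElem_inv_card_smul_allOnes X).kronecker_mul_kronecker,
    smul_vecMulVec_mul_smul_vecMulVec_of_orthogonal d two_ne_zero hd]
  split_ifs
  · exact (hG t t'').symm
  · exact kronecker_zero _

theorem stmt_2 (X Y T₂ : Type*) [Fintype X] [Nonempty X] [Fintype Y] [DecidableEq Y]
    [Fintype T₂] [DecidableEq T₂]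
    (y1 y2 : T₂ → Y) (hne : ∀ t, y1 t ≠ y2 t)
    (hdisj : ∀ t t', t ≠ t' → ({y1 t, y2 t} : Set Y) ∩ {y1 t', y2 t'} = ∅) :
    let J : Matrix X X ℂ := Matrix.of fun _ _ => 1
    let G : T₂ → T₂ → Matrix (X × Y) (X × Y) ℂ := fun t t' =>
      (1 / (2 * (Fintype.card X : ℂ))) •
        (J ⊗ₖ (Matrix.single (y1 t) (y1 t') 1 + Matrix.single (y2 t) (y2 t') 1
          - Matrix.single (y1 t) (y2 t') 1 - Matrix.single (y2 t) (y1 t') 1))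
    ∀ t t' t'' t''' : T₂,
      G t t' * G t''' t'' = if t' = t''' then G t t'' else 0 :=
  stmt_2_general X Y T₂ y1 y2 hne hdisj
end

section
/- Let X be a finite nonempty set and let B ⊆ Y be a two-element subset {y₁, y₂} of a finite set Y. Then in Mat_{X×Y}(ℂ) the identity ε_{X×B} I = (1/(2|X|)) J_{X×B} + [ (ε_{X×B} − (1/|X|)(J_{X×{y₁}} + J_{X×{y₂}}) ] + (1/(2|X|)) J_X ⊗ (ε_{y₁} + ε_{y₂} − J_{{y₁},{y₂}} − J_{{y₂},{y₁}}) holds, i.e., the three idempotents on the right sum to the diagonal projection ε_{X×B}, and they are pairwise orthogonal idempotents. -/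
/-!
Write `P = |X|⁻¹ J` for the averaging projection on `ℂ^X`, and `u = 1_{y₁} + 1_{y₂}`,
`v = 1_{y₁} - 1_{y₂}`. Since `u ⬝ u = v ⬝ v = 2` and `u ⬝ v = 0`, the rank-one matrices
`e = ½ u uᵀ` and `f = ½ v vᵀ` are orthogonal idempotents with `e + f = ε_B`. The three matrices
of the decomposition are `P ⊗ e`, `(1 - P) ⊗ ε_B` and `P ⊗ f`, while `ε_{X×B} = 1 ⊗ ε_B`; since
`(A ⊗ B) (A' ⊗ B') = A A' ⊗ B B'`, idempotence and orthogonality follow factorwise.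
-/

open Matrix Kronecker

namespace Matrix

theorem sub_kronecker {R l m n p : Type*} [NonUnitalNonAssocRing R] (A₁ A₂ : Matrix l m R)
    (B : Matrix n p R) : (A₁ - A₂) ⊗ₖ B = A₁ ⊗ₖ B - A₂ ⊗ₖ B := by
  ext
  simp [sub_mul]

section KroneckerIdempotents

variable {R m n : Type*} [CommRing R] [Fintype m] [Fintype n]

theorem _root_.IsIdempotentElem.kronecker {A : Matrix m m R} {B : Matrix n n R}
    (hA : IsIdempotentElem A) (hB : IsIdempotentElem B) : IsIdempotentElem (A ⊗ₖ B) := by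
  rw [IsIdempotentElem, ← mul_kronecker_mul, hA.eq, hB.eq]

theorem kronecker_mul_kronecker_eq_zero_of_left {A A' : Matrix m m R} (h : A * A' = 0)
    (B B' : Matrix n n R) : A ⊗ₖ B * A' ⊗ₖ B' = 0 := by
  rw [← mul_kronecker_mul, h, zero_kronecker]

theorem kronecker_mul_kronecker_eq_zero_of_right {B B' : Matrix n n R} (h : B * B' = 0)
    (A A' : Matrix m m R) : A ⊗ₖ B * A' ⊗ₖ B' = 0 := by
  rw [← mul_kronecker_mul, h, kronecker_zero]

theorem kronecker_orthogonal_idempotents [DecidableEq m] {p : Matrix m m R}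
    {e f s : Matrix n n R} (hp : IsIdempotentElem p) (he : IsIdempotentElem e)
    (hf : IsIdempotentElem f) (hef : e * f = 0) (hfe : f * e = 0) (hs : e + f = s) :
    let E₁ := p ⊗ₖ e
    let E₂ := (1 - p) ⊗ₖ s
    let E₃ := p ⊗ₖ f
    1 ⊗ₖ s = E₁ + E₂ + E₃ ∧
    E₁ * E₁ = E₁ ∧ E₂ * E₂ = E₂ ∧ E₃ * E₃ = E₃ ∧
    E₁ * E₂ = 0 ∧ E₂ * E₁ = 0 ∧ E₁ * E₃ = 0 ∧ E₃ * E₁ = 0 ∧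
    E₂ * E₃ = 0 ∧ E₃ * E₂ = 0 := by
  have hs_idem : IsIdempotentElem s := by
    rw [← hs, IsIdempotentElem, add_mul, mul_add, mul_add, hef, hfe, he.eq, hf.eq,
      add_zero, zero_add]
  refine ⟨?_, hp.kronecker he, hp.one_sub.kronecker hs_idem, hp.kronecker hf,
    kronecker_mul_kronecker_eq_zero_of_left hp.mul_one_sub_self _ _,
    kronecker_mul_kronecker_eq_zero_of_left hp.one_sub_mul_self _ _,
    kronecker_mul_kronecker_eq_zero_of_right hef _ _,
    kronecker_mul_kronecker_eq_zero_of_right hfe _ _,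
    kronecker_mul_kronecker_eq_zero_of_left hp.one_sub_mul_self _ _,
    kronecker_mul_kronecker_eq_zero_of_left hp.mul_one_sub_self _ _⟩
  rw [add_right_comm, ← kronecker_add, hs, ← add_kronecker, add_sub_cancel]

end KroneckerIdempotents

theorem vecMulVec_mul_vecMulVec_eq_zero {R l m n : Type*} [NonUnitalSemiring R] [Fintype m]
    {v w : m → R} (h : v ⬝ᵥ w = 0) (u : l → R) (x : n → R) :
    vecMulVec u v * vecMulVec w x = 0 := by
  rw [vecMulVec_mul_vecMulVec, h, zero_smul]
  exact Matrix.ext fun _ _ => mul_zero _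

theorem isIdempotentElem_inv_smul_vecMulVec_self {K n : Type*} [Field K] [Fintype n]
    {u : n → K} {c : K} (hu : u ⬝ᵥ u = c) (hc : c ≠ 0) :
    IsIdempotentElem (c⁻¹ • vecMulVec u u) := by
  rw [IsIdempotentElem, smul_mul_smul_comm, vecMulVec_mul_vecMulVec, hu, vecMulVec_smul,
    smul_smul, inv_mul_cancel_right₀ hc]

end Matrix

section PairVectors

variable {R Y : Type*} [CommRing R] [DecidableEq Y] (y₁ y₂ : Y)

def pairSumVec : Y → R := Pi.single y₁ 1 + Pi.single y₂ 1

def pairDiffVec : Y → R := Pi.single y₁ 1 - Pi.single y₂ 1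

variable {y₁ y₂}

theorem pairSumVec_apply (hy : y₁ ≠ y₂) (y : Y) :
    pairSumVec y₁ y₂ y = if y = y₁ ∨ y = y₂ then (1 : R) else 0 := by
  by_cases h₁ : y = y₁ <;> by_cases h₂ : y = y₂ <;> simp_all [pairSumVec]

theorem diagonal_pairSumVec :
    diagonal (pairSumVec y₁ y₂ : Y → R) = single y₁ y₁ 1 + single y₂ y₂ 1 := by
  rw [← diagonal_single, ← diagonal_single, diagonal_add]
  rfl

theorem vecMulVec_pairDiffVec_self :
    vecMulVec (pairDiffVec y₁ y₂) (pairDiffVec y₁ y₂) =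
      single y₁ y₁ (1 : R) + single y₂ y₂ 1 - single y₁ y₂ 1 - single y₂ y₁ 1 := by
  simp only [pairDiffVec, vecMulVec_sub, sub_vecMulVec, single_eq_single_vecMulVec_single]
  abel

theorem vecMulVec_pairSumVec_self_add_vecMulVec_pairDiffVec_self :
    vecMulVec (pairSumVec y₁ y₂) (pairSumVec y₁ y₂) +
        vecMulVec (pairDiffVec y₁ y₂) (pairDiffVec y₁ y₂) =
      (2 : R) • diagonal (pairSumVec y₁ y₂ : Y → R) := by
  rw [diagonal_pairSumVec]
  simp only [pairSumVec, pairDiffVec, vecMulVec_sub, sub_vecMulVec, vecMulVec_add,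
    add_vecMulVec, ← single_eq_single_vecMulVec_single]
  module

variable [Fintype Y]

theorem pairSumVec_dotProduct_self (hy : y₁ ≠ y₂) :
    pairSumVec y₁ y₂ ⬝ᵥ pairSumVec y₁ y₂ = (2 : R) := by
  simp [pairSumVec, dotProduct_add, hy, hy.symm, one_add_one_eq_two]

theorem pairDiffVec_dotProduct_self (hy : y₁ ≠ y₂) :
    pairDiffVec y₁ y₂ ⬝ᵥ pairDiffVec y₁ y₂ = (2 : R) := by
  simp [pairDiffVec, dotProduct_sub, hy, hy.symm, one_add_one_eq_two]

theorem pairSumVec_dotProduct_pairDiffVec :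
    pairSumVec y₁ y₂ ⬝ᵥ pairDiffVec y₁ y₂ = (0 : R) := by
  simp only [pairSumVec, pairDiffVec, add_dotProduct, single_one_dotProduct, Pi.sub_apply,
    Pi.single_eq_same, Pi.single_comm y₁]
  abel

theorem pairDiffVec_dotProduct_pairSumVec :
    pairDiffVec y₁ y₂ ⬝ᵥ pairSumVec y₁ y₂ = (0 : R) := by
  simp only [pairSumVec, pairDiffVec, sub_dotProduct, single_one_dotProduct, Pi.add_apply,
    Pi.single_eq_same, Pi.single_comm y₁]
  abel

end PairVectors

section BlockMatrices

variable {R X Y : Type*} [CommRing R] [DecidableEq Y] {y₁ y₂ : Y}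

theorem one_kronecker_diagonal_pairSumVec [DecidableEq X] (hy : y₁ ≠ y₂) :
    (1 : Matrix X X R) ⊗ₖ diagonal (pairSumVec y₁ y₂) =
      diagonal fun p : X × Y => if p.2 = y₁ ∨ p.2 = y₂ then 1 else 0 := by
  rw [← diagonal_one, diagonal_kronecker_diagonal]
  congr 1
  funext p
  simp [pairSumVec_apply hy]

theorem of_one_kronecker_vecMulVec_pairSumVec_self (hy : y₁ ≠ y₂) :
    (of fun _ _ => 1 : Matrix X X R) ⊗ₖ vecMulVec (pairSumVec y₁ y₂) (pairSumVec y₁ y₂) =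
      of fun p q : X × Y =>
        if (p.2 = y₁ ∨ p.2 = y₂) ∧ (q.2 = y₁ ∨ q.2 = y₂) then 1 else 0 := by
  ext ⟨x, a⟩ ⟨x', b⟩
  simp [vecMulVec_apply, pairSumVec_apply hy, ← ite_and, and_comm]

theorem of_one_kronecker_single_self (y : Y) :
    (of fun _ _ => 1 : Matrix X X R) ⊗ₖ single y y 1 =
      of fun p q : X × Y => if p.2 = y ∧ q.2 = y then 1 else 0 := by
  ext ⟨x, a⟩ ⟨x', b⟩
  simp [single_apply, eq_comm]

end BlockMatrices

theorem stmt_8 (X Y : Type*) [Fintype X] [Nonempty X] [Fintype Y] [DecidableEq X] [DecidableEq Y]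
    (y₁ y₂ : Y) (hy : y₁ ≠ y₂) :
    let J : Matrix X X ℂ := Matrix.of fun _ _ => 1
    -- diagonal projection onto X × {y₁, y₂}
    let εXB : Matrix (X × Y) (X × Y) ℂ :=
      Matrix.diagonal fun p => if p.2 = y₁ ∨ p.2 = y₂ then 1 else 0
    -- all-ones on (X × {y₁,y₂}) × (X × {y₁,y₂})
    let JXB : Matrix (X × Y) (X × Y) ℂ :=
      Matrix.of fun p q => if (p.2 = y₁ ∨ p.2 = y₂) ∧ (q.2 = y₁ ∨ q.2 = y₂) then 1 else 0
    -- all-ones on (X × {y}) × (X × {y})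
    let JXy : Y → Matrix (X × Y) (X × Y) ℂ := fun y =>
      Matrix.of fun p q => if p.2 = y ∧ q.2 = y then 1 else 0
    let E₁ : Matrix (X × Y) (X × Y) ℂ := (1 / (2 * (Fintype.card X : ℂ))) • JXB
    let E₂ : Matrix (X × Y) (X × Y) ℂ :=
      εXB - (1 / (Fintype.card X : ℂ)) • (JXy y₁ + JXy y₂)
    let E₃ : Matrix (X × Y) (X × Y) ℂ :=
      (1 / (2 * (Fintype.card X : ℂ))) •
        (J ⊗ₖ (Matrix.single y₁ y₁ 1 + Matrix.single y₂ y₂ 1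
          - Matrix.single y₁ y₂ 1 - Matrix.single y₂ y₁ 1))
    εXB * 1 = E₁ + E₂ + E₃ ∧
    E₁ * E₁ = E₁ ∧ E₂ * E₂ = E₂ ∧ E₃ * E₃ = E₃ ∧
    E₁ * E₂ = 0 ∧ E₂ * E₁ = 0 ∧ E₁ * E₃ = 0 ∧ E₃ * E₁ = 0 ∧
    E₂ * E₃ = 0 ∧ E₃ * E₂ = 0 := by
  intro J εXB JXB JXy E₁ E₂ E₃
  set n : ℂ := (Fintype.card X : ℂ)
  set u : Y → ℂ := pairSumVec y₁ y₂
  set v : Y → ℂ := pairDiffVec y₁ y₂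
  have hεXB : εXB = 1 ⊗ₖ diagonal u := (one_kronecker_diagonal_pairSumVec hy).symm
  have hE₁ : E₁ = (n⁻¹ • J) ⊗ₖ ((2 : ℂ)⁻¹ • vecMulVec u u) := by
    show (1 / (2 * n)) • JXB = _
    rw [smul_kronecker, kronecker_smul, smul_smul, of_one_kronecker_vecMulVec_pairSumVec_self hy,
      ← mul_inv, mul_comm, ← one_div]
  have hE₂ : E₂ = (1 - n⁻¹ • J) ⊗ₖ diagonal u := by
    show εXB - (1 / n) • (JXy y₁ + JXy y₂) = _
    rw [sub_kronecker, smul_kronecker, ← hεXB, diagonal_pairSumVec, kronecker_add,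
      of_one_kronecker_single_self, of_one_kronecker_single_self, one_div]
  have hE₃ : E₃ = (n⁻¹ • J) ⊗ₖ ((2 : ℂ)⁻¹ • vecMulVec v v) := by
    show (1 / (2 * n)) • (J ⊗ₖ _) = _
    rw [smul_kronecker, kronecker_smul, smul_smul, vecMulVec_pairDiffVec_self, ← mul_inv,
      mul_comm, ← one_div]
  have hJ : J = vecMulVec 1 1 := by ext; simp [J, vecMulVec_apply]
  have hn : n ≠ 0 := Nat.cast_ne_zero.2 Fintype.card_ne_zero
  rw [mul_one, hεXB, hE₁, hE₂, hE₃]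
  refine kronecker_orthogonal_idempotents ?_ ?_ ?_ ?_ ?_ ?_
  · exact hJ ▸ isIdempotentElem_inv_smul_vecMulVec_self one_dotProduct_one hn
  · exact isIdempotentElem_inv_smul_vecMulVec_self (pairSumVec_dotProduct_self hy) two_ne_zero
  · exact isIdempotentElem_inv_smul_vecMulVec_self (pairDiffVec_dotProduct_self hy) two_ne_zero
  · rw [smul_mul_smul_comm, vecMulVec_mul_vecMulVec_eq_zero pairSumVec_dotProduct_pairDiffVec,
      smul_zero]
  · rw [smul_mul_smul_comm, vecMulVec_mul_vecMulVec_eq_zero pairDiffVec_dotProduct_pairSumVec,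
      smul_zero]
  · rw [← smul_add, vecMulVec_pairSumVec_self_add_vecMulVec_pairDiffVec_self, smul_smul,
      inv_mul_cancel₀ two_ne_zero, one_smul]
end
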